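/- For every nonnegative integer n, every nonnegative integer r, and every real x, one has B_n^{(c,r)}(x) = ∑_{l=0}^{n} ∑_{m=0}^{l} x^m · C(n,l) · S_2(l,m) · (r - m/2)^{n-l}. -/

import Mathlib

/-!
Expanding `(j + (r - k/2))^n` binomially writes `T_r(n+r, k+r)` as
`∑_l C(n,l) S_2(l,k) (r - k/2)^(n-l)`. Summing against `x^k` and exchanging the two sums gives
the claim, except that `k` still runs up to `n`; the terms with `l < k` vanish because
`S_2(l,k) = 0` there.
-/

/-- The extended `r`-central factorial numbers of the second kind:
`T_r(n+r,k+r) = (1/k!) ∑_{j=0}^{k} (-1)^{k-j} C(k,j) (j + r - k/2)^n`. -/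
noncomputable def rcentralT (r n k : ℕ) : ℝ :=
  (1 / (Nat.factorial k : ℝ)) * ∑ j ∈ Finset.range (k + 1),
    (-1 : ℝ) ^ (k - j) * (Nat.choose k j : ℝ) * ((j : ℝ) + (r : ℝ) - (k : ℝ) / 2) ^ n

/-- The extended `r`-central Bell polynomials: `B_n^{(c,r)}(x) = ∑_{k=0}^{n} T_r(n+r,k+r) x^k`. -/
noncomputable def rcentralBell (r n : ℕ) (x : ℝ) : ℝ :=
  ∑ k ∈ Finset.range (n + 1), rcentralT r n k * x ^ k

/-- The Stirling numbers of the second kind: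
`S_2(n,k) = (1/k!) ∑_{j=0}^{k} (-1)^{k-j} C(k,j) j^n`. -/
noncomputable def stirling2 (n k : ℕ) : ℝ :=
  (1 / (Nat.factorial k : ℝ)) * ∑ j ∈ Finset.range (k + 1),
    (-1 : ℝ) ^ (k - j) * (Nat.choose k j : ℝ) * (j : ℝ) ^ n

open Finset

/-- The sum is the `k`-th forward difference of `t ↦ t ^ l` at `0`, which vanishes as `l < k`. -/
theorem sum_range_neg_one_pow_mul_choose_mul_pow_eq_zero {R : Type*} [CommRing R] {k l : ℕ}
    (hlk : l < k) :
    ∑ j ∈ range (k + 1), (-1 : R) ^ (k - j) * (k.choose j : R) * (j : R) ^ l = 0 := by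
  have h := congr_fun (fwdDiff_iter_pow_eq_zero_of_lt (R := R) hlk) 0
  rw [fwdDiff_iter_eq_sum_shift] at h
  simpa [zsmul_eq_mul] using h

theorem stirling2_eq_zero_of_lt {l k : ℕ} (hlk : l < k) : stirling2 l k = 0 := by
  rw [stirling2, sum_range_neg_one_pow_mul_choose_mul_pow_eq_zero hlk, mul_zero]

theorem one_div_factorial_mul_sum_add_pow_eq_sum_choose_mul_stirling2 (n k : ℕ) (a : ℝ) :
    (1 / (k.factorial : ℝ)) *
        ∑ j ∈ range (k + 1), (-1 : ℝ) ^ (k - j) * (k.choose j : ℝ) * ((j : ℝ) + a) ^ n =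
      ∑ l ∈ range (n + 1), (n.choose l : ℝ) * stirling2 l k * a ^ (n - l) := by
  simp only [add_pow, stirling2, mul_sum, sum_mul]
  rw [sum_comm]
  refine sum_congr rfl fun l _ => sum_congr rfl fun j _ => ?_
  ring

theorem rcentralT_eq_sum_choose_mul_stirling2 (r n k : ℕ) :
    rcentralT r n k = ∑ l ∈ range (n + 1),
      (n.choose l : ℝ) * stirling2 l k * ((r : ℝ) - (k : ℝ) / 2) ^ (n - l) := by
  simp_rw [rcentralT, add_sub_assoc]
  exact one_div_factorial_mul_sum_add_pow_eq_sum_choose_mul_stirling2 n k _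

/-- For every nonnegative integer `n`, nonnegative integer `r` and real `x`:
`B_n^{(c,r)}(x) = ∑_{l=0}^{n} ∑_{m=0}^{l} x^m · C(n,l) · S_2(l,m) · (r - m/2)^{n-l}`. -/
theorem rcentralBell_eq_double_sum_stirling2 (n r : ℕ) (x : ℝ) :
    rcentralBell r n x =
      ∑ l ∈ Finset.range (n + 1), ∑ m ∈ Finset.range (l + 1),
        x ^ m * (Nat.choose n l : ℝ) * stirling2 l m * ((r : ℝ) - (m : ℝ) / 2) ^ (n - l) := by
  set f : ℕ → ℕ → ℝ := fun l m =>
    x ^ m * (n.choose l : ℝ) * stirling2 l m * ((r : ℝ) - (m : ℝ) / 2) ^ (n - l)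
  have expand : rcentralBell r n x = ∑ l ∈ range (n + 1), ∑ m ∈ range (n + 1), f l m := by
    rw [rcentralBell, sum_comm]
    refine sum_congr rfl fun m _ => ?_
    rw [rcentralT_eq_sum_choose_mul_stirling2, sum_mul]
    exact sum_congr rfl fun l _ => by ring
  rw [expand]
  refine sum_congr rfl fun l hl => (sum_subset (range_subset_range.2 (by simpa using hl))
    fun m _ hm => ?_).symm
  simp only [f, stirling2_eq_zero_of_lt (by simpa using hm : l < m), mul_zero, zero_mul]
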